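/- Let (X, E) be a connected coarse space, z ∈ X a fixed point, and A(X) the free abelian group of exponent p on X. The family of sets Y_{n,ε} + {0, z, 2z, ..., (p−1)z}, for n < ω and symmetric ε ∈ E, is a base for a group ideal I on A(X): it is closed under downward inclusion up to members, B − C ∈ I for all B, C ∈ I, and every finite subset of A(X) belongs to I. -/

import Mathlib

/-- A coarse structure on `X`. -/
def IsCoarseStructure {X : Type*} (E : Set (Set (X × X))) : Prop :=
  (∀ ε ∈ E, ∀ x : X, (x, x) ∈ ε) ∧
  (∀ ε ∈ E, ∀ δ ∈ E, {p : X × X | ∃ z : X, (p.1, z) ∈ ε ∧ (z, p.2) ∈ δ} ∈ E) ∧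
  (∀ ε ∈ E, {p : X × X | (p.2, p.1) ∈ ε} ∈ E) ∧
  (∀ ε ∈ E, ∀ ε' ⊆ ε, (∀ x : X, (x, x) ∈ ε') → ε' ∈ E)

/-- Connectedness: any two points are related by some entourage. -/
def IsConnectedCoarse {X : Type*} (E : Set (Set (X × X))) : Prop :=
  ∀ x y : X, ∃ ε ∈ E, (x, y) ∈ ε

/-- The `n`-fold sumset of `S` in an additive commutative group. -/
def nSumset {A : Type*} [AddCommGroup A] (S : Set A) (n : ℕ) : Set A :=
  {a | ∃ f : Fin n → A, (∀ i, f i ∈ S) ∧ a = ∑ i, f i}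

/-- The set `Y_ε = {x − y : (x, y) ∈ ε}` of differences of generators of the free
abelian group `A(X) = ⊕_{x ∈ X} ℤ/p` of exponent `p` on `X`. -/
def Yset {X : Type*} (p : ℕ) (ε : Set (X × X)) : Set (X →₀ ZMod p) :=
  {a | ∃ q ∈ ε, a = Finsupp.single q.1 (1 : ZMod p) - Finsupp.single q.2 (1 : ZMod p)}

/-- The coefficient-sum homomorphism `A(X) → ℤ/p`. -/
noncomputable def coeffSum (X : Type*) (p : ℕ) : (X →₀ ZMod p) →+ ZMod p :=
  Finsupp.liftAddHom fun _ : X => AddMonoidHom.id (ZMod p)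

/-- A group ideal on an additive group: closed under subsets and finite unions,
contains all finite sets, and `B − C` belongs to it for members `B, C`. -/
def IsAddGroupIdeal {A : Type*} [AddGroup A] (I : Set (Set A)) : Prop :=
  (∀ B ∈ I, ∀ C ⊆ B, C ∈ I) ∧
  (∀ B ∈ I, ∀ C ∈ I, B ∪ C ∈ I) ∧
  (∀ B : Set A, B.Finite → B ∈ I) ∧
  (∀ B ∈ I, ∀ C ∈ I, {a : A | ∃ b ∈ B, ∃ c ∈ C, a = b - c} ∈ I)


/-!
Write `S n ε` for `Y_{n,ε} + {0, z, …, (p−1)z}`. Closure under subsets is built in, and any two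
basic sets `S n ε`, `S m ε'` lie in `S (n + m) (ε ∪ ε')`, which gives finite unions. For symmetric
`ε` the set `Y_ε` is closed under negation, so `S n ε - S m ε ⊆ S (n + m) ε`. Finally the elements
`a` with `{a}` in the ideal form a subgroup containing every generator `x = (x − z) + z`, where
`(x, z)` is an entourage by connectedness; so this subgroup is all of `A(X)`, and finite sets
are finite unions of singletons.
-/

open Finsupp

section nSumset

variable {A : Type*} [AddCommGroup A] {S T : Set A} {n m : ℕ} {a b : A}

lemma nSumset_mono (h : S ⊆ T) : nSumset S n ⊆ nSumset T n := by
  rintro a ⟨f, hf, rfl⟩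
  exact ⟨f, fun i => h (hf i), rfl⟩

lemma mem_nSumset_one (ha : a ∈ S) : a ∈ nSumset S 1 :=
  ⟨fun _ => a, fun _ => ha, by simp⟩

lemma zero_mem_nSumset (h : (0 : A) ∈ S) (n : ℕ) : (0 : A) ∈ nSumset S n :=
  ⟨fun _ => 0, fun _ => h, by simp⟩

lemma add_mem_nSumset (ha : a ∈ nSumset S n) (hb : b ∈ nSumset S m) :
    a + b ∈ nSumset S (n + m) := by
  obtain ⟨f, hf, rfl⟩ := ha
  obtain ⟨g, hg, rfl⟩ := hb
  refine ⟨Fin.append f g, fun i => ?_, by simp [Fin.sum_univ_add]⟩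
  induction i using Fin.addCases with
  | left i => simpa using hf i
  | right i => simpa using hg i

lemma nSumset_subset_nSumset_of_le (h : (0 : A) ∈ S) (hnm : n ≤ m) :
    nSumset S n ⊆ nSumset S m := by
  intro a ha
  obtain ⟨k, rfl⟩ := Nat.exists_eq_add_of_le hnm
  simpa using add_mem_nSumset ha (zero_mem_nSumset h k)

lemma neg_mem_nSumset (hS : ∀ a ∈ S, -a ∈ S) (ha : a ∈ nSumset S n) : -a ∈ nSumset S n := by
  obtain ⟨f, hf, rfl⟩ := ha
  exact ⟨fun i => -f i, fun i => hS _ (hf i), by simp⟩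

lemma sub_mem_nSumset (hS : ∀ a ∈ S, -a ∈ S) (ha : a ∈ nSumset S n) (hb : b ∈ nSumset S m) :
    a - b ∈ nSumset S (n + m) := by
  simpa [sub_eq_add_neg] using add_mem_nSumset ha (neg_mem_nSumset hS hb)

end nSumset

section Coarse

variable {X : Type*} {E : Set (Set (X × X))} {ε ε' : Set (X × X)}

def IsSymmRel (ε : Set (X × X)) : Prop :=
  ∀ q : X × X, q ∈ ε ↔ (q.2, q.1) ∈ ε

lemma IsSymmRel.union (hε : IsSymmRel ε) (hε' : IsSymmRel ε') : IsSymmRel (ε ∪ ε') :=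
  fun q => or_congr (hε q) (hε' q)

lemma IsCoarseStructure.union_mem (hE : IsCoarseStructure E) (hε : ε ∈ E) (hε' : ε' ∈ E) :
    ε ∪ ε' ∈ E := by
  refine hE.2.2.2 _ (hE.2.1 ε hε ε' hε') _ ?_ fun x => Or.inl (hE.1 ε hε x)
  rintro ⟨x, y⟩ (h | h)
  · exact ⟨y, h, hE.1 ε' hε' y⟩
  · exact ⟨x, hE.1 ε hε x, h⟩

lemma IsCoarseStructure.exists_isSymmRel_superset (hE : IsCoarseStructure E) (hε : ε ∈ E) :
    ∃ δ ∈ E, IsSymmRel δ ∧ ε ⊆ δ :=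
  ⟨ε ∪ {q | (q.2, q.1) ∈ ε}, hE.union_mem hε (hE.2.2.1 ε hε),
    fun _ => Or.comm, Set.subset_union_left⟩

lemma IsConnectedCoarse.exists_isSymmRel_mem (hE : IsCoarseStructure E)
    (hconn : IsConnectedCoarse E) (x y : X) : ∃ δ ∈ E, IsSymmRel δ ∧ (x, y) ∈ δ := by
  obtain ⟨ε, hε, hxy⟩ := hconn x y
  obtain ⟨δ, hδ, hsymm, hεδ⟩ := hE.exists_isSymmRel_superset hε
  exact ⟨δ, hδ, hsymm, hεδ hxy⟩

end Coarse

section Yset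

variable {X : Type*} {p : ℕ} {ε ε' : Set (X × X)}

lemma Yset_mono (h : ε ⊆ ε') : Yset p ε ⊆ Yset p ε' := by
  rintro a ⟨q, hq, rfl⟩
  exact ⟨q, h hq, rfl⟩

lemma single_sub_single_mem_Yset {x y : X} (h : (x, y) ∈ ε) :
    single x (1 : ZMod p) - single y 1 ∈ Yset p ε :=
  ⟨(x, y), h, rfl⟩

lemma zero_mem_Yset {x : X} (h : (x, x) ∈ ε) : (0 : X →₀ ZMod p) ∈ Yset p ε := by
  simpa using single_sub_single_mem_Yset (p := p) h

lemma IsSymmRel.neg_mem_Yset (hε : IsSymmRel ε) {a : X →₀ ZMod p} (ha : a ∈ Yset p ε) :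
    -a ∈ Yset p ε := by
  obtain ⟨q, hq, rfl⟩ := ha
  simpa using single_sub_single_mem_Yset (p := p) ((hε q).1 hq)

end Yset

section baseSet

variable {X : Type*} (p : ℕ) (z : X)

/-- The set `Y_{n,ε} + {0, z, 2z, …, (p−1)z}`. -/
def baseSet (n : ℕ) (ε : Set (X × X)) : Set (X →₀ ZMod p) :=
  {a | ∃ b ∈ nSumset (Yset p ε) n, ∃ i : ZMod p, a = b + i • single z 1}

variable {p z} {n m : ℕ} {ε ε' : Set (X × X)}

lemma baseSet_mono (hεε' : ε ⊆ ε') (hz : (z, z) ∈ ε') (hnm : n ≤ m) :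
    baseSet p z n ε ⊆ baseSet p z m ε' := by
  rintro a ⟨b, hb, i, rfl⟩
  exact ⟨b, nSumset_subset_nSumset_of_le (zero_mem_Yset hz) hnm (nSumset_mono (Yset_mono hεε') hb),
    i, rfl⟩

lemma IsSymmRel.sub_mem_baseSet (hε : IsSymmRel ε) {a b : X →₀ ZMod p}
    (ha : a ∈ baseSet p z n ε) (hb : b ∈ baseSet p z m ε) : a - b ∈ baseSet p z (n + m) ε := by
  obtain ⟨a, ha, i, rfl⟩ := ha
  obtain ⟨b, hb, j, rfl⟩ := hb
  exact ⟨a - b, sub_mem_nSumset (fun _ => hε.neg_mem_Yset) ha hb, i - j, by module⟩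

lemma zero_mem_baseSet (hz : (z, z) ∈ ε) : (0 : X →₀ ZMod p) ∈ baseSet p z n ε :=
  ⟨0, zero_mem_nSumset (zero_mem_Yset hz) n, 0, by simp⟩

lemma single_one_mem_baseSet {x : X} (h : (x, z) ∈ ε) : single x 1 ∈ baseSet p z 1 ε :=
  ⟨_, mem_nSumset_one (single_sub_single_mem_Yset h), 1, by simp⟩

end baseSet

section baseIdeal

variable {X : Type*} (p : ℕ) (E : Set (Set (X × X))) (z : X)

def baseIdeal : Set (Set (X →₀ ZMod p)) :=
  {A | ∃ n : ℕ, ∃ ε ∈ E, IsSymmRel ε ∧ A ⊆ baseSet p z n ε}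

variable {p E z} {B C : Set (X →₀ ZMod p)}

lemma mem_baseIdeal_of_subset (hB : B ∈ baseIdeal p E z) (hCB : C ⊆ B) : C ∈ baseIdeal p E z :=
  let ⟨n, ε, hε, hsymm, hBε⟩ := hB
  ⟨n, ε, hε, hsymm, hCB.trans hBε⟩

lemma union_mem_baseIdeal (hE : IsCoarseStructure E) (hB : B ∈ baseIdeal p E z)
    (hC : C ∈ baseIdeal p E z) : B ∪ C ∈ baseIdeal p E z := by
  obtain ⟨n, ε, hε, hsymm, hBε⟩ := hB
  obtain ⟨m, ε', hε', hsymm', hCε'⟩ := hC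
  have hz : (z, z) ∈ ε ∪ ε' := Or.inl (hE.1 ε hε z)
  exact ⟨n + m, ε ∪ ε', hE.union_mem hε hε', hsymm.union hsymm',
    Set.union_subset
      (hBε.trans (baseSet_mono Set.subset_union_left hz (Nat.le_add_right n m)))
      (hCε'.trans (baseSet_mono Set.subset_union_right hz (Nat.le_add_left m n)))⟩

lemma sub_mem_baseIdeal (hE : IsCoarseStructure E) (hB : B ∈ baseIdeal p E z)
    (hC : C ∈ baseIdeal p E z) :
    {a | ∃ b ∈ B, ∃ c ∈ C, a = b - c} ∈ baseIdeal p E z := by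
  obtain ⟨n, ε, hε, hsymm, hBε⟩ := hB
  obtain ⟨m, ε', hε', hsymm', hCε'⟩ := hC
  have hz : (z, z) ∈ ε ∪ ε' := Or.inl (hE.1 ε hε z)
  refine ⟨n + m, ε ∪ ε', hE.union_mem hε hε', hsymm.union hsymm', ?_⟩
  rintro _ ⟨b, hb, c, hc, rfl⟩
  exact (hsymm.union hsymm').sub_mem_baseSet
    (baseSet_mono Set.subset_union_left hz le_rfl (hBε hb))
    (baseSet_mono Set.subset_union_right hz le_rfl (hCε' hc))

lemma singleton_mem_baseIdeal (hE : IsCoarseStructure E) (hconn : IsConnectedCoarse E)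
    (a : X →₀ ZMod p) : {a} ∈ baseIdeal p E z := by
  let G : AddSubgroup (X →₀ ZMod p) := AddSubgroup.ofSub {a | {a} ∈ baseIdeal p E z}
    (by
      obtain ⟨δ, hδ, hsymm, hzz⟩ := hconn.exists_isSymmRel_mem hE z z
      exact ⟨0, 0, δ, hδ, hsymm, Set.singleton_subset_iff.2 (zero_mem_baseSet hzz)⟩)
    (fun a ha b hb => by simpa [← sub_eq_add_neg] using sub_mem_baseIdeal hE ha hb)
  have single_mem (x : X) (c : ZMod p) : single x c ∈ G := by
    obtain ⟨δ, hδ, hsymm, hxz⟩ := hconn.exists_isSymmRel_mem hE x z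
    have hx : single x 1 ∈ G :=
      ⟨1, δ, hδ, hsymm, Set.singleton_subset_iff.2 (single_one_mem_baseSet hxz)⟩
    obtain ⟨k, rfl⟩ := ZMod.intCast_surjective c
    simpa [Finsupp.smul_single] using G.zsmul_mem hx k
  induction a using Finsupp.induction_linear with
  | zero => exact G.zero_mem
  | add a b ha hb => exact G.add_mem ha hb
  | single x c => exact single_mem x c

lemma finite_mem_baseIdeal (hE : IsCoarseStructure E) (hconn : IsConnectedCoarse E)
    (hB : B.Finite) : B ∈ baseIdeal p E z := by
  induction B, hB using Set.Finite.induction_on with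
  | empty => exact mem_baseIdeal_of_subset (singleton_mem_baseIdeal hE hconn 0) (Set.empty_subset _)
  | insert _ _ ih => exact union_mem_baseIdeal hE (singleton_mem_baseIdeal hE hconn _) ih

end baseIdeal

theorem base_group_ideal_on_freeAbelian_general {X : Type*} (p : ℕ)
    (E : Set (Set (X × X))) (hE : IsCoarseStructure E) (hconn : IsConnectedCoarse E)
    (z : X) :
    IsAddGroupIdeal {A : Set (X →₀ ZMod p) |
      ∃ n : ℕ, ∃ ε ∈ E, (∀ q : X × X, q ∈ ε ↔ (q.2, q.1) ∈ ε) ∧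
        A ⊆ {a | ∃ b ∈ nSumset (Yset p ε) n, ∃ i : ZMod p,
          a = b + i • Finsupp.single z (1 : ZMod p)}} := by
  change IsAddGroupIdeal (baseIdeal p E z)
  exact ⟨fun _ hB _ hCB => mem_baseIdeal_of_subset hB hCB,
    fun _ hB _ hC => union_mem_baseIdeal hE hB hC,
    fun _ hB => finite_mem_baseIdeal hE hconn hB,
    fun _ hB _ hC => sub_mem_baseIdeal hE hB hC⟩

/-- For a connected coarse space `(X, E)` and `z ∈ X`, the sets
`Y_{n,ε} + {0, z, 2z, …, (p−1)z}` (for `n < ω`, symmetric `ε ∈ E`) form a base for a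
group ideal on `A(X)`. -/
theorem base_group_ideal_on_freeAbelian {X : Type*} (p : ℕ) [Fact p.Prime]
    (E : Set (Set (X × X))) (hE : IsCoarseStructure E) (hconn : IsConnectedCoarse E)
    (z : X) :
    IsAddGroupIdeal {A : Set (X →₀ ZMod p) |
      ∃ n : ℕ, ∃ ε ∈ E, (∀ q : X × X, q ∈ ε ↔ (q.2, q.1) ∈ ε) ∧
        A ⊆ {a | ∃ b ∈ nSumset (Yset p ε) n, ∃ i : ZMod p,
          a = b + i • Finsupp.single z (1 : ZMod p)}} :=
  base_group_ideal_on_freeAbelian_general p E hE hconn z
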